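/- arXiv:2005.11263 — 4 statements merged into one kernel-verified Lean document; each statement's English description precedes it below -/
import Mathlib

section
/- The function Λ(x) = e^{x²}(1 - erf(x)) is strictly monotonically decreasing on the real line. -/
open MeasureTheory intervalIntegral Set Filter Topology

/-- The complex error function: path integral of `e^{-ξ²}` from `0` to `z`
along the straight line, times `2/√π`. -/
noncomputable def cerf (z : ℂ) : ℂ :=
  (2 / (Real.sqrt Real.pi : ℂ)) * ∫ s in (0:ℝ)..1, z * Complex.exp (-((s : ℂ) * z)^2)

/-- `Λ(z) = e^{z²}(1 - erf z)`. -/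
noncomputable def Lam (z : ℂ) : ℂ := Complex.exp (z^2) * (1 - cerf z)
/-- The real error function. -/
noncomputable def rerf (x : ℝ) : ℝ :=
  (2 / Real.sqrt Real.pi) * ∫ t in (0:ℝ)..x, Real.exp (-t^2)

/-- The real version of `Λ`: `Λ(x) = e^{x²}(1 - erf x)`. -/
noncomputable def LamR (x : ℝ) : ℝ := Real.exp (x^2) * (1 - rerf x)

/-
Substituting `t = x + s` in `1 - erf x = (2/√π) ∫_x^∞ e^{-t²} dt` gives
`Λ(x) = (2/√π) ∫_0^∞ e^{-s² - 2xs} ds`. For every `s > 0` the integrand is strictly decreasing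
in `x`, so the integral is strictly decreasing as well.
-/

lemma setIntegral_lt_setIntegral_of_forall_lt {X : Type*} [MeasurableSpace X] {μ : Measure X}
    {s : Set X} {f g : X → ℝ} (hs : MeasurableSet s) (hμs : μ s ≠ 0)
    (hf : IntegrableOn f s μ) (hg : IntegrableOn g s μ) (hlt : ∀ x ∈ s, f x < g x) :
    ∫ x in s, f x ∂μ < ∫ x in s, g x ∂μ := by
  rw [← sub_pos, ← integral_sub hg hf]
  refine (setIntegral_pos_iff_support_of_nonneg_ae (f := g - f) ?_ (hg.sub hf)).2 ?_
  · filter_upwards [ae_restrict_mem hs] with x hx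
    exact (sub_pos.2 (hlt x hx)).le
  · have hsupp : s ⊆ Function.support (g - f) ∩ s := fun x hx =>
      ⟨(sub_pos.2 (hlt x hx)).ne', hx⟩
    exact (pos_iff_ne_zero.2 hμs).trans_le (measure_mono hsupp)

lemma integrable_exp_neg_sq : Integrable fun t : ℝ => Real.exp (-t ^ 2) := by
  simpa using integrable_exp_neg_mul_sq one_pos

lemma one_sub_rerf_eq_integral_Ioi (x : ℝ) :
    1 - rerf x = 2 / Real.sqrt Real.pi * ∫ t in Ioi x, Real.exp (-t ^ 2) := by
  have hhalf : ∫ t in Ioi (0 : ℝ), Real.exp (-t ^ 2) = Real.sqrt Real.pi / 2 := by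
    simpa using integral_gaussian_Ioi 1
  have hsplit := integral_Ioi_sub_Ioi' (a := 0) (b := x) (μ := volume)
    integrable_exp_neg_sq.integrableOn integrable_exp_neg_sq.integrableOn
  have hpi : Real.sqrt Real.pi ≠ 0 := by positivity
  rw [rerf, ← hsplit, hhalf]
  field_simp
  ring

lemma exp_neg_sq_sub_two_mul (x s : ℝ) :
    Real.exp (-s ^ 2 - 2 * x * s) = Real.exp (x ^ 2) * Real.exp (-(s + x) ^ 2) := by
  rw [← Real.exp_add]
  ring_nf

lemma integrable_exp_neg_sq_sub_two_mul (x : ℝ) :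
    Integrable fun s : ℝ => Real.exp (-s ^ 2 - 2 * x * s) := by
  simp_rw [exp_neg_sq_sub_two_mul x]
  exact (integrable_exp_neg_sq.comp_add_right x).const_mul _

lemma LamR_eq_integral (x : ℝ) :
    LamR x = 2 / Real.sqrt Real.pi * ∫ s in Ioi (0 : ℝ), Real.exp (-s ^ 2 - 2 * x * s) := by
  have hshift : ∫ s in Ioi (0 : ℝ), Real.exp (-(s + x) ^ 2)
      = ∫ t in Ioi x, Real.exp (-t ^ 2) := by
    simpa using (measurePreserving_add_right volume x).setIntegral_preimage_emb
      (measurableEmbedding_addRight x) (fun t => Real.exp (-t ^ 2)) (Ioi x)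
  simp_rw [LamR, one_sub_rerf_eq_integral_Ioi, exp_neg_sq_sub_two_mul x,
    MeasureTheory.integral_const_mul, hshift]
  ring

lemma strictAnti_integral_exp_neg_sq_sub_two_mul :
    StrictAnti fun x : ℝ => ∫ s in Ioi (0 : ℝ), Real.exp (-s ^ 2 - 2 * x * s) := by
  intro x y hxy
  refine setIntegral_lt_setIntegral_of_forall_lt measurableSet_Ioi (by simp)
    (integrable_exp_neg_sq_sub_two_mul y).integrableOn
    (integrable_exp_neg_sq_sub_two_mul x).integrableOn fun s (hs : 0 < s) => ?_
  gcongr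

theorem LamR_strictAnti : StrictAnti LamR := by
  rw [show LamR = _ from funext LamR_eq_integral]
  exact strictAnti_integral_exp_neg_sq_sub_two_mul.const_mul (by positivity)
end

section
/- For every a > 0 and b, c ∈ ℂ with c ≠ b/(2√a), one has ∫₀^∞ e^{-a x² - b x} Λ(√a·x + c) dx = -(1/(2√a)) · (Λ(c) - Λ(b/(2√a)))/(c - b/(2√a)). -/
/-!
Since `erf' = (2/√π) e^{-z²}`, `Λ` solves `Λ' = 2zΛ - 2/√π`. With `s = √a` and `β = b/(2s)`,
the function `Φ(x) = e^{-s²x² - 2sβx} (Λ(sx + c) - Λ(sx + β))` therefore has derivative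
`2s(c - β) e^{-ax² - bx} Λ(sx + c)`: the constant `2/√π` cancels in the difference. `Λ` is
bounded on every half-plane `Re z ≥ r` by the representation `Λ(z) = (2/√π) ∫₀^∞ e^{-t² - 2zt} dt`
(both sides solve the same linear ODE and agree at `0`), so `Φ → 0` at `∞` and the integral is
`-Φ(0) / (2s(c - β))` by the fundamental theorem of calculus on `[0, ∞)`.
-/

open MeasureTheory intervalIntegral Set Filter Topology

open Complex (one_re mul_re sub_re re_ofNat im_ofNat)

theorem hasDerivAt_intervalIntegral_of_continuous {𝕜 E : Type*} [RCLike 𝕜]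
    [NormedAddCommGroup E] [NormedSpace ℝ E] [NormedSpace 𝕜 E] {F F' : 𝕜 → ℝ → E}
    {z₀ : 𝕜} {a b : ℝ} (hF : Continuous F.uncurry) (hF' : Continuous F'.uncurry)
    (hderiv : ∀ z t, HasDerivAt (F · t) (F' z t) z) :
    HasDerivAt (fun z => ∫ t in a..b, F z t) (∫ t in a..b, F' z₀ t) z₀ := by
  obtain ⟨C, hC⟩ := ((isCompact_closedBall z₀ 1).prod isCompact_uIcc).exists_bound_of_continuousOn
    (hF'.continuousOn (s := Metric.closedBall z₀ 1 ×ˢ uIcc a b))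
  have hFz : ∀ z, Continuous (F z) := fun z => hF.comp (Continuous.prodMk_right z)
  refine (hasDerivAt_integral_of_dominated_loc_of_deriv_le (bound := fun _ => C)
    (Metric.ball_mem_nhds z₀ one_pos) (.of_forall fun z => (hFz z).aestronglyMeasurable)
    ((hFz z₀).intervalIntegrable a b)
    (hF'.comp (Continuous.prodMk_right z₀)).aestronglyMeasurable ?_ intervalIntegrable_const
    (.of_forall fun t _ z _ => hderiv z t)).2
  refine .of_forall fun t ht z hz => hC (z, t) ⟨Metric.ball_subset_closedBall hz, ?_⟩
  exact uIoc_subset_uIcc ht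

/-- `z ↦ ∫₀¹ z φ(sz) ds` is the integral of `φ` along the segment `[0, z]`. -/
theorem hasDerivAt_integral_mul_comp_mul {φ φ' : ℂ → ℂ} (hφ : ∀ w, HasDerivAt φ (φ' w) w)
    (hφ' : Continuous φ') (z : ℂ) :
    HasDerivAt (fun z => ∫ s in (0:ℝ)..1, z * φ (s * z)) (φ z) z := by
  have hφc : Continuous φ := continuous_iff_continuousAt.2 fun w => (hφ w).continuousAt
  have hderiv_z : ∀ (w : ℂ) (s : ℝ),
      HasDerivAt (fun w => w * φ (s * w)) (φ (s * w) + s * w * φ' (s * w)) w := by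
    intro w s
    refine ((hasDerivAt_id' w).mul ((hφ (s * w)).comp w
      ((hasDerivAt_id' w).const_mul (s : ℂ)))).congr_deriv ?_
    simp only [Function.comp_apply]
    ring
  have hderiv_s : ∀ s : ℝ,
      HasDerivAt (fun s : ℝ => (s : ℂ) * φ (s * z)) (φ (s * z) + s * z * φ' (s * z)) s := by
    intro s
    have : HasDerivAt (fun w : ℂ => w * φ (w * z)) (φ (s * z) + s * z * φ' (s * z)) s := by
      refine ((hasDerivAt_id' (s : ℂ)).mul ((hφ (s * z)).comp (s : ℂ)
        ((hasDerivAt_id' (s : ℂ)).mul_const z))).congr_deriv ?_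
      simp only [Function.comp_apply]
      ring
    exact this.comp_ofReal
  refine (hasDerivAt_intervalIntegral_of_continuous (z₀ := z) (a := 0) (b := 1)
    (by fun_prop) (by fun_prop) hderiv_z).congr_deriv ?_
  rw [integral_eq_sub_of_hasDerivAt (fun s _ => hderiv_s s)
    (Continuous.intervalIntegrable (by fun_prop) _ _)]
  simp

theorem hasDerivAt_cerf (z : ℂ) :
    HasDerivAt cerf (2 / (Real.sqrt Real.pi : ℂ) * Complex.exp (-z ^ 2)) z := by
  have hφ : ∀ w : ℂ, HasDerivAt (fun w => Complex.exp (-w ^ 2))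
      (Complex.exp (-w ^ 2) * (-(2 * w))) w := fun w => by
    simpa using ((hasDerivAt_pow 2 w).neg).cexp
  exact (hasDerivAt_integral_mul_comp_mul hφ (by fun_prop) z).const_mul _

theorem hasDerivAt_Lam (z : ℂ) :
    HasDerivAt Lam (2 * z * Lam z - 2 / (Real.sqrt Real.pi : ℂ)) z := by
  have hexp : HasDerivAt (fun z : ℂ => Complex.exp (z ^ 2)) (Complex.exp (z ^ 2) * (2 * z)) z := by
    simpa using (hasDerivAt_pow 2 z).cexp
  refine (hexp.mul ((hasDerivAt_cerf z).const_sub 1)).congr_deriv ?_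
  have : Complex.exp (z ^ 2) * Complex.exp (-z ^ 2) = 1 := by
    rw [← Complex.exp_add, add_neg_cancel, Complex.exp_zero]
  simp only [Lam]
  linear_combination -(2 / (Real.sqrt Real.pi : ℂ)) * this

theorem norm_cexp_neg_mul_sq_sub_mul (a b : ℂ) (x : ℝ) :
    ‖Complex.exp (-a * x ^ 2 - b * x)‖ = Real.exp (-a.re * x ^ 2 - b.re * x) := by
  rw [Complex.norm_exp]
  congr 1
  simp [sq]

theorem integrable_cexp_neg_mul_sq_sub_mul {a : ℂ} (ha : 0 < a.re) (b : ℂ) :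
    Integrable fun x : ℝ => Complex.exp (-a * x ^ 2 - b * x) := by
  simpa [sub_eq_add_neg] using integrable_cexp_quadratic ha (-b) 0

theorem integrable_exp_neg_mul_sq_sub_mul {a : ℝ} (ha : 0 < a) (r : ℝ) :
    Integrable fun x : ℝ => Real.exp (-a * x ^ 2 - r * x) := by
  simpa only [norm_cexp_neg_mul_sq_sub_mul, Complex.ofReal_re] using
    (integrable_cexp_neg_mul_sq_sub_mul (a := a) (by simpa using ha) r).norm

theorem tendsto_cexp_neg_mul_sq_sub_mul_atTop {a : ℂ} (ha : 0 < a.re) (b : ℂ) :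
    Tendsto (fun x : ℝ => Complex.exp (-a * x ^ 2 - b * x)) atTop (𝓝 0) := by
  rw [tendsto_zero_iff_norm_tendsto_zero]
  simp only [norm_cexp_neg_mul_sq_sub_mul]
  have hquad : Tendsto (fun x : ℝ => x * (a.re * x + b.re)) atTop atTop :=
    tendsto_id.atTop_mul_atTop₀
      (tendsto_atTop_add_const_right _ _ (tendsto_id.const_mul_atTop ha))
  refine Real.tendsto_exp_atBot.comp ((tendsto_neg_atTop_atBot.comp hquad).congr fun x => ?_)
  simp only [Function.comp_apply]
  ring

theorem eq_of_hasDerivAt_eq_two_mul_sub {f g : ℂ → ℂ} {k : ℂ}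
    (hf : ∀ z, HasDerivAt f (2 * z * f z - k) z) (hg : ∀ z, HasDerivAt g (2 * z * g z - k) z)
    (h₀ : f 0 = g 0) : f = g := by
  have hconst : ∀ z, HasDerivAt (fun z => Complex.exp (-z ^ 2) * (f z - g z)) 0 z := by
    intro z
    have hexp : HasDerivAt (fun z : ℂ => Complex.exp (-z ^ 2))
        (Complex.exp (-z ^ 2) * (-(2 * z))) z := by
      simpa using ((hasDerivAt_pow 2 z).neg).cexp
    refine (hexp.mul ((hf z).sub (hg z))).congr_deriv ?_
    simp only [Pi.sub_apply]
    ring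
  funext z
  have := is_const_of_deriv_eq_zero (fun z => (hconst z).differentiableAt)
    (fun z => (hconst z).deriv) z 0
  simpa [h₀, sub_eq_zero, Complex.exp_ne_zero] using this

section LaplaceRepresentation

theorem norm_mul_cexp_neg_sq_sub_mul_le {r t : ℝ} {z : ℂ} (ht : 0 ≤ t) (hr : r ≤ z.re) :
    ‖-2 * t * Complex.exp (-t ^ 2 - 2 * z * t)‖ ≤ 2 * Real.exp (-1 * t ^ 2 - (2 * r - 1) * t) := by
  have hnorm := norm_cexp_neg_mul_sq_sub_mul 1 (2 * z) t
  simp only [one_re, neg_mul, one_mul, mul_re, re_ofNat, im_ofNat, zero_mul, sub_zero] at hnorm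
  rw [norm_mul, norm_mul, hnorm]
  simp only [norm_neg, Complex.norm_ofNat, Complex.norm_real, Real.norm_of_nonneg ht]
  calc 2 * t * Real.exp (-t ^ 2 - 2 * z.re * t)
      ≤ 2 * Real.exp t * Real.exp (-t ^ 2 - 2 * r * t) := by
        gcongr
        linarith [Real.add_one_le_exp t]
    _ = 2 * Real.exp (-1 * t ^ 2 - (2 * r - 1) * t) := by
        rw [mul_assoc, ← Real.exp_add]; ring_nf

theorem integrable_cexp_neg_sq_sub_mul (z : ℂ) :
    Integrable fun t : ℝ => Complex.exp (-t ^ 2 - 2 * z * t) := by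
  simpa using integrable_cexp_neg_mul_sq_sub_mul (a := 1) one_pos (2 * z)

theorem integrableOn_mul_cexp_neg_sq_sub_mul (z : ℂ) :
    IntegrableOn (fun t : ℝ => -2 * t * Complex.exp (-t ^ 2 - 2 * z * t)) (Ioi 0) := by
  refine Integrable.mono'
    ((integrable_exp_neg_mul_sq_sub_mul one_pos (2 * z.re - 1)).const_mul 2).integrableOn
    (Continuous.aestronglyMeasurable (by fun_prop)) ?_
  rw [ae_restrict_iff' measurableSet_Ioi]
  exact .of_forall fun t ht => norm_mul_cexp_neg_sq_sub_mul_le (le_of_lt ht) le_rfl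

theorem integral_Ioi_mul_cexp_neg_sq_sub_mul (z : ℂ) :
    ∫ t in Ioi (0:ℝ), -2 * t * Complex.exp (-t ^ 2 - 2 * z * t) =
      2 * z * (∫ t in Ioi (0:ℝ), Complex.exp (-t ^ 2 - 2 * z * t)) - 1 := by
  have hderiv : ∀ t : ℝ, HasDerivAt (fun t : ℝ => Complex.exp (-t ^ 2 - 2 * z * t))
      ((-2 * t - 2 * z) * Complex.exp (-t ^ 2 - 2 * z * t)) t := by
    intro t
    have : HasDerivAt (fun w : ℂ => Complex.exp (-w ^ 2 - 2 * z * w))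
        ((-2 * t - 2 * z) * Complex.exp (-t ^ 2 - 2 * z * t)) t := by
      refine ((((hasDerivAt_pow 2 (t : ℂ)).fun_neg).fun_sub
        ((hasDerivAt_id' (t : ℂ)).const_mul (2 * z))).cexp).congr_deriv ?_
      ring
    exact this.comp_ofReal
  have hexp_int := (integrable_cexp_neg_sq_sub_mul z).integrableOn (s := Ioi 0)
  have hint : IntegrableOn (fun t : ℝ => (-2 * t - 2 * z) * Complex.exp (-t ^ 2 - 2 * z * t))
      (Ioi 0) := by
    refine ((integrableOn_mul_cexp_neg_sq_sub_mul z).sub (hexp_int.const_mul (2 * z))).congr_fun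
      (fun t _ => ?_) measurableSet_Ioi
    simp only [Pi.sub_apply]
    ring
  have hftc := integral_Ioi_of_hasDerivAt_of_tendsto' (fun t _ => hderiv t) hint
    (by simpa using tendsto_cexp_neg_mul_sq_sub_mul_atTop (a := 1) one_pos (2 * z))
  calc ∫ t in Ioi (0:ℝ), -2 * t * Complex.exp (-t ^ 2 - 2 * z * t)
      = ∫ t in Ioi (0:ℝ), ((-2 * t - 2 * z) * Complex.exp (-t ^ 2 - 2 * z * t) +
          2 * z * Complex.exp (-t ^ 2 - 2 * z * t)) := by
        congr 1; funext t; ring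
    _ = (0 - 1) + 2 * z * ∫ t in Ioi (0:ℝ), Complex.exp (-t ^ 2 - 2 * z * t) := by
        rw [integral_add hint (hexp_int.const_mul _), hftc, MeasureTheory.integral_const_mul]
        simp
    _ = _ := by ring

theorem hasDerivAt_integral_Ioi_cexp_neg_sq_sub_mul (z : ℂ) :
    HasDerivAt (fun z => ∫ t in Ioi (0:ℝ), Complex.exp (-t ^ 2 - 2 * z * t))
      (2 * z * (∫ t in Ioi (0:ℝ), Complex.exp (-t ^ 2 - 2 * z * t)) - 1) z := by
  rw [← integral_Ioi_mul_cexp_neg_sq_sub_mul]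
  have hbound : ∀ t ∈ Ioi (0:ℝ), ∀ w ∈ Metric.ball z 1,
      ‖-2 * t * Complex.exp (-t ^ 2 - 2 * w * t)‖ ≤
        2 * Real.exp (-1 * t ^ 2 - (2 * (z.re - 1) - 1) * t) := by
    intro t ht w hw
    refine norm_mul_cexp_neg_sq_sub_mul_le (le_of_lt ht) ?_
    have := (Complex.abs_re_le_norm (w - z)).trans (mem_ball_iff_norm.1 hw).le
    rw [sub_re, abs_le] at this
    linarith
  have hderiv : ∀ (t : ℝ) (w : ℂ), HasDerivAt (fun w => Complex.exp (-t ^ 2 - 2 * w * t))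
      (-2 * t * Complex.exp (-t ^ 2 - 2 * w * t)) w := by
    intro t w
    refine (((hasDerivAt_id' w).const_mul (2 : ℂ)).mul_const (t : ℂ)).const_sub _ |>.cexp
      |>.congr_deriv ?_
    ring
  refine (hasDerivAt_integral_of_dominated_loc_of_deriv_le (Metric.ball_mem_nhds z one_pos)
    (.of_forall fun w => (integrable_cexp_neg_sq_sub_mul w).integrableOn.aestronglyMeasurable)
    (integrable_cexp_neg_sq_sub_mul z).integrableOn
    (integrableOn_mul_cexp_neg_sq_sub_mul z).aestronglyMeasurable
    ((ae_restrict_iff' measurableSet_Ioi).2 (.of_forall hbound))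
    ((integrable_exp_neg_mul_sq_sub_mul one_pos _).const_mul 2).integrableOn
    (.of_forall fun t w _ => hderiv t w)).2

theorem integral_Ioi_cexp_neg_sq :
    ∫ t in Ioi (0:ℝ), Complex.exp (-(t : ℂ) ^ 2) = (Real.sqrt Real.pi : ℂ) / 2 := by
  have := integral_gaussian_Ioi 1
  rw [div_one] at this
  rw [← Complex.ofReal_ofNat, ← Complex.ofReal_div, ← this, ← integral_complex_ofReal]
  congr 1; funext t
  push_cast; ring_nf

theorem Lam_eq_integral (z : ℂ) :
    Lam z = 2 / (Real.sqrt Real.pi : ℂ) * ∫ t in Ioi (0:ℝ), Complex.exp (-t ^ 2 - 2 * z * t) := by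
  refine congrFun (eq_of_hasDerivAt_eq_two_mul_sub (g := fun z => 2 / (Real.sqrt Real.pi : ℂ) *
    ∫ t in Ioi (0:ℝ), Complex.exp (-t ^ 2 - 2 * z * t)) hasDerivAt_Lam (fun w => ?_) ?_) z
  · refine ((hasDerivAt_integral_Ioi_cexp_neg_sq_sub_mul w).const_mul _).congr_deriv ?_
    ring
  · have hπ : (Real.sqrt Real.pi : ℂ) ≠ 0 := by
      exact_mod_cast (Real.sqrt_pos.2 Real.pi_pos).ne'
    simp [Lam, cerf, integral_Ioi_cexp_neg_sq, hπ]

theorem exists_norm_Lam_le_of_le_re (r : ℝ) : ∃ M, ∀ z : ℂ, r ≤ z.re → ‖Lam z‖ ≤ M := by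
  refine ⟨‖2 / (Real.sqrt Real.pi : ℂ)‖ * ∫ t in Ioi (0:ℝ), Real.exp (-1 * t ^ 2 - 2 * r * t),
    fun z hz => ?_⟩
  rw [Lam_eq_integral, norm_mul]
  gcongr
  refine norm_integral_le_of_norm_le
    (integrable_exp_neg_mul_sq_sub_mul one_pos (2 * r)).integrableOn ?_
  rw [ae_restrict_iff' measurableSet_Ioi]
  refine .of_forall fun t (ht : 0 < t) => ?_
  have hnorm := norm_cexp_neg_mul_sq_sub_mul 1 (2 * z) t
  simp only [one_re, neg_mul, one_mul, mul_re, re_ofNat, im_ofNat, zero_mul, sub_zero] at hnorm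
  rw [hnorm]
  gcongr
  nlinarith

end LaplaceRepresentation

section ShiftedGaussianIntegral

variable {f : ℂ → ℂ} {k : ℂ}

theorem hasDerivAt_cexp_mul_sub_comp (hf : ∀ z, HasDerivAt f (2 * z * f z - k) z)
    (s β c : ℂ) (x : ℝ) :
    HasDerivAt
      (fun x : ℝ => Complex.exp (-s ^ 2 * x ^ 2 - 2 * s * β * x) * (f (s * x + c) - f (s * x + β)))
      (2 * s * (c - β) * (Complex.exp (-s ^ 2 * x ^ 2 - 2 * s * β * x) * f (s * x + c))) x := by
  have hexp : HasDerivAt (fun w : ℂ => Complex.exp (-s ^ 2 * w ^ 2 - 2 * s * β * w))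
      ((-2 * s ^ 2 * x - 2 * s * β) * Complex.exp (-s ^ 2 * x ^ 2 - 2 * s * β * x)) x := by
    refine ((((hasDerivAt_pow 2 (x : ℂ)).const_mul (-s ^ 2)).fun_sub
      ((hasDerivAt_id' (x : ℂ)).const_mul (2 * s * β))).cexp).congr_deriv ?_
    ring
  have hshift : ∀ w : ℂ, HasDerivAt (fun z => f (s * z + w))
      (s * (2 * (s * x + w) * f (s * x + w) - k)) x := fun w => by
    refine ((hf (s * x + w)).comp (x : ℂ) (((hasDerivAt_id' (x : ℂ)).const_mul s).add_const w)
      ).congr_deriv ?_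
    ring
  refine (hexp.mul ((hshift c).fun_sub (hshift β))).comp_ofReal.congr_deriv ?_
  ring

theorem exists_norm_comp_mul_add_le (hbdd : ∀ r : ℝ, ∃ M, ∀ z : ℂ, r ≤ z.re → ‖f z‖ ≤ M)
    {s : ℝ} (hs : 0 ≤ s) (w : ℂ) : ∃ M, ∀ x : ℝ, 0 ≤ x → ‖f (s * x + w)‖ ≤ M := by
  obtain ⟨M, hM⟩ := hbdd w.re
  refine ⟨M, fun x hx => hM _ ?_⟩
  simpa using mul_nonneg hs hx

theorem integral_Ioi_cexp_mul_comp_mul_add (hf : ∀ z, HasDerivAt f (2 * z * f z - k) z)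
    (hbdd : ∀ r : ℝ, ∃ M, ∀ z : ℂ, r ≤ z.re → ‖f z‖ ≤ M) {s : ℝ} (hs : 0 < s) (b c : ℂ)
    (hc : c ≠ b / (2 * s)) :
    ∫ x in Ioi (0:ℝ), Complex.exp (-(s : ℂ) ^ 2 * x ^ 2 - b * x) * f (s * x + c) =
      -(1 / (2 * s)) * ((f c - f (b / (2 * s))) / (c - b / (2 * s))) := by
  set β := b / (2 * s)
  have hs' : (s : ℂ) ≠ 0 := by exact_mod_cast hs.ne'
  have hb : b = 2 * s * β := by simp only [β]; field_simp
  have hfc : Continuous f := continuous_iff_continuousAt.2 fun z => (hf z).continuousAt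
  obtain ⟨Mc, hMc⟩ := exists_norm_comp_mul_add_le hbdd hs.le c
  obtain ⟨Mβ, hMβ⟩ := exists_norm_comp_mul_add_le hbdd hs.le β
  have hsq : 0 < ((s : ℂ) ^ 2).re := by simpa [← Complex.ofReal_pow] using pow_pos hs 2
  have hint : IntegrableOn
      (fun x : ℝ => Complex.exp (-(s : ℂ) ^ 2 * x ^ 2 - b * x) * f (s * x + c)) (Ioi 0) :=
    (integrable_cexp_neg_mul_sq_sub_mul hsq b).integrableOn.mul_bdd
      (Continuous.aestronglyMeasurable (by fun_prop))
      ((ae_restrict_iff' measurableSet_Ioi).2 (.of_forall fun x hx => hMc x (le_of_lt hx)))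
  have hlim : Tendsto (fun x : ℝ => Complex.exp (-(s : ℂ) ^ 2 * x ^ 2 - b * x) *
      (f (s * x + c) - f (s * x + β))) atTop (𝓝 0) := by
    refine (tendsto_cexp_neg_mul_sq_sub_mul_atTop hsq b).zero_mul_isBoundedUnder_le
      ⟨Mc + Mβ, eventually_map.2 ((eventually_ge_atTop 0).mono fun x hx => ?_)⟩
    exact (norm_sub_le _ _).trans (add_le_add (hMc x hx) (hMβ x hx))
  have hftc := integral_Ioi_of_hasDerivAt_of_tendsto'
    (fun x _ => by simpa only [← hb] using hasDerivAt_cexp_mul_sub_comp hf s β c x)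
    (hint.const_mul _) hlim
  rw [MeasureTheory.integral_const_mul] at hftc
  set I := ∫ x in Ioi (0:ℝ), Complex.exp (-(s : ℂ) ^ 2 * x ^ 2 - b * x) * f (s * x + c)
  norm_num at hftc
  have hcβ : c - β ≠ 0 := sub_ne_zero.2 hc
  field_simp
  linear_combination hftc

end ShiftedGaussianIntegral

theorem gaussian_integral_Lam_shift (a : ℝ) (ha : 0 < a) (b c : ℂ)
    (hc : c ≠ b / (2 * (Real.sqrt a : ℂ))) :
    ∫ x in Set.Ioi (0:ℝ),
        Complex.exp (-(a:ℂ) * (x:ℂ)^2 - b * (x:ℂ)) * Lam ((Real.sqrt a : ℂ) * (x:ℂ) + c) =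
      -(1 / (2 * (Real.sqrt a : ℂ))) *
        ((Lam c - Lam (b / (2 * (Real.sqrt a : ℂ)))) / (c - b / (2 * (Real.sqrt a : ℂ)))) := by
  have hsq : ((Real.sqrt a : ℂ)) ^ 2 = a := by exact_mod_cast Real.sq_sqrt ha.le
  simpa only [hsq] using integral_Ioi_cexp_mul_comp_mul_add hasDerivAt_Lam
    exists_norm_Lam_le_of_le_re (Real.sqrt_pos.2 ha) b c hc
end

section
/- Let F be holomorphic on an open set containing the sector S_α (0 < α < π/2) with |F(z)| ≤ A e^{B Im(z)} on S_α for some A, B ≥ 0. Then for each t > 0 and x ∈ ℝ \ {0} the improper Riemann integral Ψ₀(t,x) = lim_{R→∞} ∫₀^R G₀(t,x,y) F(y) dy exists and equals the absolutely convergent integral e^{iα} ∫₀^∞ G₀(t,x,ye^{iα}) F(ye^{iα}) dy, where G₀(t,x,z) = (1/(2√(iπt))) e^{-(|x|+z)²/(4it)}. -/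
/-!
Rotate the contour. By Cauchy's theorem on the truncated sector `δ ≤ |z| ≤ R`, `0 ≤ arg z ≤ α`
(the image under `exp` of a rectangle), the integral over `[δ, R]` equals the integral over the
rotated segment minus the arc at radius `R` plus the arc at radius `δ`. The small arc vanishes as
`δ → 0` by continuity at `0`. Since `Im (z²) = 2|z|² cos θ sin θ ≥ 2|z|² cos α sin θ` on the sector
and `sin θ ≥ 2θ/π`, a bound `C e^{-a Im(z²) + b Im z}` makes the large arc `O(1/R)` and is
Gaussian on the rotated ray. The kernel has this decay with `a = 1/(4t)`, because
`|G₀(t,x,z)| = e^{-Im((|x|+z)²)/(4t)} / (2√(πt))` and `Im((|x|+z)²) ≥ Im(z²)` when `Im z ≥ 0`.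
-/

open MeasureTheory intervalIntegral Set Filter Topology

/-- The sector `S_α = {z : z = 0 ∨ 0 ≤ Arg z ≤ α}`. -/
def sector (α : ℝ) : Set ℂ := {z : ℂ | z = 0 ∨ (0 ≤ z.arg ∧ z.arg ≤ α)}
/-- `√(it) = e^{iπ/4}√t` for `t > 0`. -/
noncomputable def sqit (t : ℝ) : ℂ :=
  Complex.exp (Real.pi / 4 * Complex.I) * (Real.sqrt t : ℂ)

/-- `√(iπt) = e^{iπ/4}√(πt)` for `t > 0`. -/
noncomputable def sqipt (t : ℝ) : ℂ :=
  Complex.exp (Real.pi / 4 * Complex.I) * (Real.sqrt (Real.pi * t) : ℂ)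

/-- The free Schrödinger kernel. -/
noncomputable def Gfree (t x : ℝ) (z : ℂ) : ℂ :=
  (2 * sqipt t)⁻¹ * Complex.exp (-((x : ℂ) - z)^2 / (4 * Complex.I * (t : ℂ)))

/-- The kernel `G₀`. -/
noncomputable def G0 (t x : ℝ) (z : ℂ) : ℂ :=
  (2 * sqipt t)⁻¹ * Complex.exp (-(((|x| : ℝ) : ℂ) + z)^2 / (4 * Complex.I * (t : ℂ)))

/-- The kernel `G₁` with parameter `ω`. -/
noncomputable def G1 (ω : ℝ) (t x : ℝ) (z : ℂ) : ℂ :=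
  Lam ((((|x| : ℝ) : ℂ) + z) / (2 * sqit t) + (ω : ℂ) * sqit t) *
    Complex.exp (-(((|x| : ℝ) : ℂ) + z)^2 / (4 * Complex.I * (t : ℂ)))

open Interval
open Complex (I)

section Sector

lemma ofReal_mul_exp_mul_I_re (y θ : ℝ) :
    ((y : ℂ) * Complex.exp (θ * I)).re = y * Real.cos θ := by
  simp [Complex.exp_mul_I, ← Complex.ofReal_cos, ← Complex.ofReal_sin]

lemma ofReal_mul_exp_mul_I_im (y θ : ℝ) :
    ((y : ℂ) * Complex.exp (θ * I)).im = y * Real.sin θ := by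
  simp [Complex.exp_mul_I, ← Complex.ofReal_cos, ← Complex.ofReal_sin]

lemma ofReal_mul_exp_mul_I_sq_im (y θ : ℝ) :
    (((y : ℂ) * Complex.exp (θ * I)) ^ 2).im = 2 * y ^ 2 * Real.cos θ * Real.sin θ := by
  rw [sq, Complex.mul_im, ofReal_mul_exp_mul_I_re, ofReal_mul_exp_mul_I_im]
  ring

lemma norm_ofReal_mul_exp_mul_I {y : ℝ} (hy : 0 ≤ y) (θ : ℝ) :
    ‖(y : ℂ) * Complex.exp (θ * I)‖ = y := by
  simp [Complex.norm_exp, abs_of_nonneg hy]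

lemma zero_mem_sector (α : ℝ) : (0 : ℂ) ∈ sector α := Or.inl rfl

lemma ofReal_mul_exp_mul_I_mem_sector {α θ y : ℝ} (hθ0 : 0 ≤ θ) (hθα : θ ≤ α)
    (hαπ : α ≤ Real.pi) (hy : 0 ≤ y) : (y : ℂ) * Complex.exp (θ * I) ∈ sector α := by
  rcases hy.eq_or_lt with rfl | hy
  · simp [zero_mem_sector]
  · right
    rw [Complex.exp_mul_I, Complex.arg_real_mul _ hy, Complex.arg_cos_add_sin_mul_I
      ⟨by linarith [Real.pi_pos], hθα.trans hαπ⟩]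
    exact ⟨hθ0, hθα⟩

lemma ofReal_mem_sector {α y : ℝ} (hα0 : 0 ≤ α) (hαπ : α ≤ Real.pi) (hy : 0 ≤ y) :
    (y : ℂ) ∈ sector α := by
  simpa using ofReal_mul_exp_mul_I_mem_sector le_rfl hα0 hαπ hy

lemma im_nonneg_of_mem_sector {α : ℝ} {z : ℂ} (hz : z ∈ sector α) : 0 ≤ z.im := by
  rcases hz with rfl | ⟨h, -⟩
  · simp
  · exact Complex.arg_nonneg_iff.mp h

end Sector

section Contour

variable {α : ℝ} {f : ℂ → ℂ}

noncomputable def arcIntegral (f : ℂ → ℂ) (α r : ℝ) : ℂ :=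
  I * ∫ θ in (0 : ℝ)..α, f (r * Complex.exp (θ * I)) * (r * Complex.exp (θ * I))

lemma integral_comp_exp_mul_exp {g : ℝ → ℂ} {δ R : ℝ} (hδ : 0 < δ) (hR : 0 < R)
    (hg : ContinuousOn g [[δ, R]]) :
    ∫ x in Real.log δ..Real.log R, g (Real.exp x) * Real.exp x = ∫ y in δ..R, g y := by
  have himage : Real.exp '' [[Real.log δ, Real.log R]] ⊆ [[δ, R]] := by
    have := (Real.exp_monotone.mapsTo_uIcc (a := Real.log δ) (b := Real.log R)).image_subset
    rwa [Real.exp_log hδ, Real.exp_log hR] at this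
  have := integral_deriv_smul_comp' (fun x _ => Real.hasDerivAt_exp x)
    Real.continuous_exp.continuousOn (hg.mono himage)
  simpa [Real.exp_log hδ, Real.exp_log hR, Complex.real_smul, mul_comm] using this

lemma exp_mem_sector_of_im_mem (hα0 : 0 ≤ α) (hαπ : α ≤ Real.pi) {w : ℂ}
    (hw : w.im ∈ [[0, α]]) : Complex.exp w ∈ sector α := by
  rw [uIcc_of_le hα0] at hw
  have : Complex.exp w = (Real.exp w.re : ℂ) * Complex.exp (w.im * I) := by
    rw [Complex.ofReal_exp, ← Complex.exp_add, Complex.re_add_im]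
  exact this ▸ ofReal_mul_exp_mul_I_mem_sector hw.1 hw.2 hαπ (Real.exp_nonneg _)

lemma integral_eq_integral_ray_sub_arcIntegral_add_arcIntegral (hα0 : 0 ≤ α)
    (hαπ : α ≤ Real.pi) (hf : DifferentiableOn ℂ f (sector α)) {δ R : ℝ} (hδ : 0 < δ)
    (hR : 0 < R) :
    ∫ y in δ..R, f y = Complex.exp (α * I) * (∫ y in δ..R, f (y * Complex.exp (α * I)))
      - arcIntegral f α R + arcIntegral f α δ := by
  have hcont := hf.continuousOn
  have hrect : DifferentiableOn ℂ (fun w => f (Complex.exp w) * Complex.exp w)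
      ([[Real.log δ, Real.log R]] ×ℂ [[0, α]]) :=
    (hf.comp Complex.differentiable_exp.differentiableOn
      fun w hw => exp_mem_sector_of_im_mem hα0 hαπ hw.2).mul
      Complex.differentiable_exp.differentiableOn
  have key := Complex.integral_boundary_rect_eq_zero_of_differentiableOn _
    (Real.log δ) (Real.log R + α * I) (by simpa using hrect)
  have hexp_log : ∀ {r : ℝ}, 0 < r → ∀ θ : ℝ,
      Complex.exp (Real.log r + θ * I) = r * Complex.exp (θ * I) := fun hr θ => by
    rw [Complex.exp_add, ← Complex.ofReal_exp, Real.exp_log hr]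
  have hbottom : ∫ x in Real.log δ..Real.log R, f (Complex.exp x) * Complex.exp x
      = ∫ y in δ..R, f y := by
    have := integral_comp_exp_mul_exp (g := fun y : ℝ => f y) hδ hR
      (hcont.comp Complex.continuous_ofReal.continuousOn
        fun y hy => ofReal_mem_sector hα0 hαπ ((lt_min hδ hR).le.trans hy.1))
    push_cast at this
    exact this
  have htop : ∫ x in Real.log δ..Real.log R,
        f (Complex.exp (x + α * I)) * Complex.exp (x + α * I)
      = Complex.exp (α * I) * ∫ y in δ..R, f (y * Complex.exp (α * I)) := by
    have := integral_comp_exp_mul_exp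
      (g := fun y : ℝ => Complex.exp (α * I) * f (y * Complex.exp (α * I))) hδ hR
      (continuousOn_const.mul (hcont.comp (by fun_prop) fun y hy =>
        ofReal_mul_exp_mul_I_mem_sector hα0 le_rfl hαπ ((lt_min hδ hR).le.trans hy.1)))
    rw [intervalIntegral.integral_const_mul] at this
    rw [← this]
    refine intervalIntegral.integral_congr fun x _ => ?_
    simp only [Complex.exp_add, Complex.ofReal_exp]
    ring
  simp only [Complex.ofReal_im, Complex.ofReal_zero, zero_mul, add_zero, Complex.ofReal_re,
    Complex.add_re, Complex.mul_re, Complex.I_re, mul_zero, Complex.I_im, mul_one, sub_self,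
    hbottom, Complex.add_im, Complex.mul_im, zero_add, htop, hexp_log hR, smul_eq_mul,
    hexp_log hδ, arcIntegral] at key ⊢
  linear_combination key

lemma norm_arcIntegral_le {M : ℝ → ℝ} (hα0 : 0 ≤ α) {r : ℝ} (hr : 0 ≤ r)
    (hM : IntervalIntegrable M volume 0 α)
    (hfM : ∀ θ ∈ Ioc 0 α, ‖f (r * Complex.exp (θ * I))‖ ≤ M θ) :
    ‖arcIntegral f α r‖ ≤ r * ∫ θ in (0 : ℝ)..α, M θ := by
  rw [arcIntegral, norm_mul, Complex.norm_I, one_mul, ← intervalIntegral.integral_const_mul]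
  refine intervalIntegral.norm_integral_le_of_norm_le hα0 (ae_of_all _ fun θ hθ => ?_)
    (hM.const_mul r)
  rw [norm_mul, norm_ofReal_mul_exp_mul_I hr, mul_comm r]
  exact mul_le_mul_of_nonneg_right (hfM θ hθ) hr

lemma tendsto_arcIntegral_nhdsGT_zero (hα0 : 0 ≤ α) (hαπ : α ≤ Real.pi)
    (hf : ContinuousWithinAt f (sector α) 0) :
    Tendsto (arcIntegral f α) (𝓝[>] 0) (𝓝 0) := by
  obtain ⟨ε, hε, hfε⟩ := Metric.continuousWithinAt_iff.mp hf 1 one_pos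
  set M := ‖f 0‖ + 1
  have hbound : ∀ r ∈ Ioo 0 ε, ‖arcIntegral f α r‖ ≤ α * M * r := fun r hr => by
    have := norm_arcIntegral_le (M := fun _ => M) hα0 hr.1.le intervalIntegrable_const
      fun θ hθ => by
        have hz := ofReal_mul_exp_mul_I_mem_sector hθ.1.le hθ.2 hαπ hr.1.le
        have hdist : dist (f (r * Complex.exp (θ * I))) (f 0) < 1 := hfε hz (by
          rw [dist_zero_right, norm_ofReal_mul_exp_mul_I hr.1.le]; exact hr.2)
        linarith [norm_le_norm_add_norm_sub' (f (r * Complex.exp (θ * I))) (f 0),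
          dist_eq_norm (f (r * Complex.exp (θ * I))) (f 0)]
    simpa [hα0, mul_comm, mul_left_comm] using this
  refine squeeze_zero_norm' (Filter.mem_of_superset (Ioo_mem_nhdsGT hε) hbound) ?_
  have : Tendsto (fun r : ℝ => α * M * r) (𝓝 0) (𝓝 0) := by
    simpa using (continuous_const_mul (α * M)).tendsto 0
  exact this.mono_left nhdsWithin_le_nhds

lemma tendsto_integral_nhdsGT_zero {g : ℝ → ℂ} {R : ℝ} (hR : 0 < R)
    (hg : ContinuousOn g [[0, R]]) :
    Tendsto (fun δ => ∫ y in δ..R, g y) (𝓝[>] 0) (𝓝 (∫ y in (0 : ℝ)..R, g y)) := by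
  have hcont := intervalIntegral.continuousOn_primitive_interval_left
    (hg.integrableOn_uIcc (μ := volume)) 0 left_mem_uIcc
  refine hcont.tendsto.mono_left (nhdsWithin_le_of_mem ?_)
  rw [uIcc_of_le hR.le]
  exact Filter.mem_of_superset (Ioo_mem_nhdsGT hR) Ioo_subset_Icc_self

lemma integral_eq_integral_ray_sub_arcIntegral (hα0 : 0 ≤ α) (hαπ : α ≤ Real.pi)
    (hf : DifferentiableOn ℂ f (sector α)) {R : ℝ} (hR : 0 < R) :
    ∫ y in (0 : ℝ)..R, f y
      = Complex.exp (α * I) * (∫ y in (0 : ℝ)..R, f (y * Complex.exp (α * I)))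
        - arcIntegral f α R := by
  have hcont := hf.continuousOn
  have hR0 : ∀ y ∈ [[0, R]], 0 ≤ y := fun y hy => by rw [uIcc_of_le hR.le] at hy; exact hy.1
  have hreal := tendsto_integral_nhdsGT_zero (g := fun y : ℝ => f y) hR
    (hcont.comp Complex.continuous_ofReal.continuousOn
      fun y hy => ofReal_mem_sector hα0 hαπ (hR0 y hy))
  have hray := tendsto_integral_nhdsGT_zero
    (g := fun y : ℝ => f (y * Complex.exp (α * I))) hR
    (hcont.comp (by fun_prop) fun y hy => ofReal_mul_exp_mul_I_mem_sector hα0 le_rfl hαπ (hR0 y hy))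
  have hrhs := (((tendsto_const_nhds (x := Complex.exp (α * I))).mul hray).sub
    (tendsto_const_nhds (x := arcIntegral f α R))).add
    (tendsto_arcIntegral_nhdsGT_zero hα0 hαπ (hcont 0 (zero_mem_sector α)))
  rw [add_zero] at hrhs
  refine tendsto_nhds_unique (hreal.congr' ?_) hrhs
  filter_upwards [self_mem_nhdsWithin] with δ hδ
  exact integral_eq_integral_ray_sub_arcIntegral_add_arcIntegral hα0 hαπ hf hδ hR

end Contour

section Decay

variable {α a b C : ℝ} {f : ℂ → ℂ}

lemma integral_exp_neg_mul_le_inv {k : ℝ} (hk : 0 < k) {β : ℝ} (hβ : 0 ≤ β) :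
    ∫ θ in (0 : ℝ)..β, Real.exp (-k * θ) ≤ k⁻¹ := by
  have hint := integrableOn_exp_mul_Ioi (neg_neg_of_pos hk) 0
  calc ∫ θ in (0 : ℝ)..β, Real.exp (-k * θ)
      ≤ ∫ θ in Ioi (0 : ℝ), Real.exp (-k * θ) := by
        rw [intervalIntegral.integral_of_le hβ]
        exact setIntegral_mono_set hint (ae_of_all _ fun θ => (Real.exp_pos _).le)
          Ioc_subset_Ioi_self.eventuallyLE
    _ = k⁻¹ := by rw [integral_exp_mul_Ioi (neg_neg_of_pos hk)]; simp

lemma sector_exponent_le_of_mem_arc (hα : α < Real.pi / 2) (ha : 0 < a) {R θ : ℝ}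
    (hR : 0 ≤ R) (hRb : b ≤ a * Real.cos α * R) (hθ0 : 0 ≤ θ) (hθα : θ ≤ α) :
    -a * (((R : ℂ) * Complex.exp (θ * I)) ^ 2).im + b * ((R : ℂ) * Complex.exp (θ * I)).im
      ≤ -(2 / Real.pi * a * Real.cos α * R ^ 2) * θ := by
  rw [ofReal_mul_exp_mul_I_sq_im, ofReal_mul_exp_mul_I_im]
  have hsin : 0 ≤ Real.sin θ :=
    Real.sin_nonneg_of_nonneg_of_le_pi hθ0 (by linarith [Real.pi_pos])
  have hcos : Real.cos α ≤ Real.cos θ :=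
    Real.cos_le_cos_of_nonneg_of_le_pi hθ0 (by linarith [Real.pi_pos]) hθα
  have hcosα : 0 < Real.cos α := Real.cos_pos_of_mem_Ioo ⟨by linarith, hα⟩
  have hjordan : 2 / Real.pi * θ ≤ Real.sin θ := Real.mul_le_sin hθ0 (by linarith)
  have hdrift : b * (R * Real.sin θ) ≤ a * Real.cos α * R ^ 2 * Real.sin θ := by
    nlinarith [mul_le_mul_of_nonneg_right hRb (mul_nonneg hR hsin)]
  have hquad : 2 * a * R ^ 2 * Real.cos α * Real.sin θ
      ≤ 2 * a * R ^ 2 * Real.cos θ * Real.sin θ := by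
    have : 0 ≤ 2 * a * R ^ 2 := by positivity
    nlinarith [mul_le_mul_of_nonneg_left hcos (mul_nonneg this hsin)]
  have hlin : a * Real.cos α * R ^ 2 * (2 / Real.pi * θ)
      ≤ a * Real.cos α * R ^ 2 * Real.sin θ :=
    mul_le_mul_of_nonneg_left hjordan (by positivity)
  nlinarith

lemma nonneg_of_norm_le_mul_exp {g : ℂ → ℂ} {s : Set ℂ} {φ : ℂ → ℝ} (h0 : (0 : ℂ) ∈ s)
    (hbd : ∀ z ∈ s, ‖g z‖ ≤ C * Real.exp (φ z)) : 0 ≤ C :=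
  nonneg_of_mul_nonneg_left ((norm_nonneg _).trans (hbd 0 h0)) (Real.exp_pos _)

lemma tendsto_arcIntegral_atTop (hα : α ∈ Ioo 0 (Real.pi / 2)) (ha : 0 < a)
    (hbd : ∀ z ∈ sector α, ‖f z‖ ≤ C * Real.exp (-a * (z ^ 2).im + b * z.im)) :
    Tendsto (arcIntegral f α) atTop (𝓝 0) := by
  obtain ⟨hα0, hα⟩ := hα
  have hαπ : α ≤ Real.pi := by linarith [Real.pi_pos]
  have hC : 0 ≤ C := nonneg_of_norm_le_mul_exp (zero_mem_sector α) hbd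
  have hcosα : 0 < Real.cos α := Real.cos_pos_of_mem_Ioo ⟨by linarith, hα⟩
  set k := 2 / Real.pi * a * Real.cos α
  have hk : 0 < k := by positivity
  have hbound : ∀ R ≥ max 1 (b / (a * Real.cos α)), ‖arcIntegral f α R‖ ≤ C * k⁻¹ * R⁻¹ := by
    intro R hR
    have hR0 : 0 < R := one_pos.trans_le ((le_max_left _ _).trans hR)
    have hRb : b ≤ a * Real.cos α * R := by
      have := (le_max_right _ _).trans hR
      rwa [div_le_iff₀ (by positivity), mul_comm R] at this
    have hkR : 0 < k * R ^ 2 := by positivity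
    calc ‖arcIntegral f α R‖
        ≤ R * ∫ θ in (0 : ℝ)..α, C * Real.exp (-(k * R ^ 2) * θ) := by
          refine norm_arcIntegral_le hα0.le hR0.le
            (by apply Continuous.intervalIntegrable; fun_prop) fun θ hθ => ?_
          refine (hbd _ (ofReal_mul_exp_mul_I_mem_sector hθ.1.le hθ.2 hαπ hR0.le)).trans ?_
          gcongr
          simpa [k, mul_assoc] using
            sector_exponent_le_of_mem_arc hα ha hR0.le hRb hθ.1.le hθ.2
      _ ≤ R * (C * (k * R ^ 2)⁻¹) := by
          rw [intervalIntegral.integral_const_mul]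
          gcongr
          exact integral_exp_neg_mul_le_inv hkR hα0.le
      _ = C * k⁻¹ * R⁻¹ := by field_simp
  refine squeeze_zero_norm' (eventually_atTop.mpr ⟨_, hbound⟩) ?_
  simpa using tendsto_inv_atTop_zero.const_mul (C * k⁻¹)

lemma integrableOn_ray_of_sector_bound (hα : α ∈ Ioo 0 (Real.pi / 2)) (ha : 0 < a)
    (hf : ContinuousOn f (sector α))
    (hbd : ∀ z ∈ sector α, ‖f z‖ ≤ C * Real.exp (-a * (z ^ 2).im + b * z.im)) :
    IntegrableOn (fun y : ℝ => f (y * Complex.exp (α * I))) (Ioi 0) := by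
  obtain ⟨hα0, hα⟩ := hα
  have hαπ : α ≤ Real.pi := by linarith [Real.pi_pos]
  have hmem : ∀ y ∈ Ici (0 : ℝ), (y : ℂ) * Complex.exp (α * I) ∈ sector α :=
    fun y hy => ofReal_mul_exp_mul_I_mem_sector hα0.le le_rfl hαπ hy
  have hmeas : AEStronglyMeasurable (fun y : ℝ => f (y * Complex.exp (α * I)))
      (volume.restrict (Ioi 0)) :=
    ((hf.comp (by fun_prop) hmem).mono Ioi_subset_Ici_self).aestronglyMeasurable
      measurableSet_Ioi
  set c := 2 * a * Real.cos α * Real.sin α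
  have hc : 0 < c := by
    have := Real.cos_pos_of_mem_Ioo ⟨by linarith, hα⟩
    have := Real.sin_pos_of_pos_of_lt_pi hα0 (by linarith)
    positivity
  have hgauss := (integrable_cexp_quadratic (b := c) (by simpa using hc)
    (b * Real.sin α) 0).norm.const_mul C
  refine hgauss.integrableOn.mono' hmeas ?_
  filter_upwards [ae_restrict_mem measurableSet_Ioi] with y hy
  refine (hbd _ (hmem y (Ioi_subset_Ici_self hy))).trans_eq ?_
  rw [ofReal_mul_exp_mul_I_sq_im, ofReal_mul_exp_mul_I_im]
  have : -(c : ℂ) * y ^ 2 + b * Real.sin α * y + 0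
      = ((-c * y ^ 2 + b * Real.sin α * y : ℝ) : ℂ) := by push_cast; ring
  rw [this, Complex.norm_exp_ofReal]
  congr 2; ring

lemma tendsto_integral_of_sector_bound (hα : α ∈ Ioo 0 (Real.pi / 2)) (ha : 0 < a)
    (hf : DifferentiableOn ℂ f (sector α))
    (hbd : ∀ z ∈ sector α, ‖f z‖ ≤ C * Real.exp (-a * (z ^ 2).im + b * z.im)) :
    Tendsto (fun R : ℝ => ∫ y in (0 : ℝ)..R, f y) atTop
      (𝓝 (Complex.exp (α * I) * ∫ y in Ioi (0 : ℝ), f (y * Complex.exp (α * I)))) := by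
  have hαπ : α ≤ Real.pi := by linarith [hα.2, Real.pi_pos]
  have hray := intervalIntegral_tendsto_integral_Ioi 0
    (integrableOn_ray_of_sector_bound hα ha hf.continuousOn hbd) tendsto_id
  have hlim := ((tendsto_const_nhds (x := Complex.exp (α * I))).mul hray).sub
    (tendsto_arcIntegral_atTop hα ha hbd)
  rw [sub_zero] at hlim
  refine hlim.congr' ?_
  filter_upwards [eventually_gt_atTop 0] with R hR
  exact (integral_eq_integral_ray_sub_arcIntegral hα.1.le hαπ hf hR).symm

end Decay

section Kernel

lemma differentiable_G0 (t x : ℝ) : Differentiable ℂ (G0 t x) := by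
  unfold G0
  fun_prop

lemma norm_G0 (t x : ℝ) (z : ℂ) :
    ‖G0 t x z‖ = (2 * √(Real.pi * t))⁻¹ * Real.exp (-((((|x| : ℝ) : ℂ) + z) ^ 2).im / (4 * t)) := by
  have hexponent : ∀ u : ℂ, -u / (4 * I * t) = u * I / (4 * t : ℝ) := fun u => by
    simp only [div_eq_mul_inv, mul_inv, Complex.inv_I, Complex.ofReal_mul, Complex.ofReal_ofNat]
    ring
  rw [G0, norm_mul, norm_inv, sqipt, norm_mul, norm_mul, Complex.norm_exp, hexponent,
    Complex.norm_exp, Complex.div_ofReal_re, Complex.mul_I_re]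
  simp [abs_of_nonneg (Real.sqrt_nonneg _), neg_div, mul_comm]

lemma norm_G0_le {t : ℝ} (ht : 0 < t) (x : ℝ) {z : ℂ} (hz : 0 ≤ z.im) :
    ‖G0 t x z‖ ≤ (2 * √(Real.pi * t))⁻¹ * Real.exp (-(4 * t)⁻¹ * (z ^ 2).im) := by
  rw [norm_G0]
  gcongr
  have hsq : ((((|x| : ℝ) : ℂ) + z) ^ 2).im = (z ^ 2).im + 2 * |x| * z.im := by
    simp only [sq, Complex.mul_im, Complex.add_re, Complex.add_im, Complex.ofReal_re,
      Complex.ofReal_im]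
    ring
  rw [hsq, neg_div, neg_mul, ← div_eq_inv_mul, neg_le_neg_iff]
  gcongr
  have := mul_nonneg (abs_nonneg x) hz
  linarith

end Kernel

theorem Psi0_exists_general {α : ℝ} (hα : α ∈ Set.Ioo 0 (Real.pi / 2))
    {Ω : Set ℂ} (hsub : sector α ⊆ Ω)
    {F : ℂ → ℂ} (hF : DifferentiableOn ℂ F Ω)
    {A B : ℝ}
    (hbound : ∀ z ∈ sector α, ‖F z‖ ≤ A * Real.exp (B * z.im))
    (t x : ℝ) (ht : 0 < t) :
    IntegrableOn
        (fun y : ℝ => G0 t x ((y : ℂ) * Complex.exp (α * Complex.I)) *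
          F ((y : ℂ) * Complex.exp (α * Complex.I))) (Set.Ioi 0) ∧
    Tendsto (fun R : ℝ => ∫ y in (0:ℝ)..R, G0 t x (y : ℂ) * F (y : ℂ)) atTop
      (𝓝 (Complex.exp (α * Complex.I) *
        ∫ y in Set.Ioi (0:ℝ), G0 t x ((y : ℂ) * Complex.exp (α * Complex.I)) *
          F ((y : ℂ) * Complex.exp (α * Complex.I)))) := by
  have hf : DifferentiableOn ℂ (fun z => G0 t x z * F z) (sector α) :=
    (differentiable_G0 t x).differentiableOn.mul (hF.mono hsub)
  have hbd : ∀ z ∈ sector α, ‖G0 t x z * F z‖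
      ≤ ((2 * √(Real.pi * t))⁻¹ * A) * Real.exp (-(4 * t)⁻¹ * (z ^ 2).im + B * z.im) := by
    intro z hz
    rw [norm_mul, Real.exp_add]
    calc ‖G0 t x z‖ * ‖F z‖
        ≤ ((2 * √(Real.pi * t))⁻¹ * Real.exp (-(4 * t)⁻¹ * (z ^ 2).im))
          * (A * Real.exp (B * z.im)) :=
          mul_le_mul (norm_G0_le ht x (im_nonneg_of_mem_sector hz)) (hbound z hz)
            (norm_nonneg _) (by positivity)
      _ = _ := by ring
  have ha : 0 < (4 * t)⁻¹ := by positivity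
  exact ⟨integrableOn_ray_of_sector_bound hα ha hf.continuousOn hbd,
    tendsto_integral_of_sector_bound hα ha hf hbd⟩

theorem Psi0_exists {α : ℝ} (hα : α ∈ Set.Ioo 0 (Real.pi / 2))
    {Ω : Set ℂ} (hΩ : IsOpen Ω) (hsub : sector α ⊆ Ω)
    {F : ℂ → ℂ} (hF : DifferentiableOn ℂ F Ω)
    {A B : ℝ} (hA : 0 ≤ A) (hB : 0 ≤ B)
    (hbound : ∀ z ∈ sector α, ‖F z‖ ≤ A * Real.exp (B * z.im))
    (t x : ℝ) (ht : 0 < t) (hx : x ≠ 0) :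
    IntegrableOn
        (fun y : ℝ => G0 t x ((y : ℂ) * Complex.exp (α * Complex.I)) *
          F ((y : ℂ) * Complex.exp (α * Complex.I))) (Set.Ioi 0) ∧
    Tendsto (fun R : ℝ => ∫ y in (0:ℝ)..R, G0 t x (y : ℂ) * F (y : ℂ)) atTop
      (𝓝 (Complex.exp (α * Complex.I) *
        ∫ y in Set.Ioi (0:ℝ), G0 t x ((y : ℂ) * Complex.exp (α * Complex.I)) *
          F ((y : ℂ) * Complex.exp (α * Complex.I)))) :=
  Psi0_exists_general hα hsub hF hbound t x ht
end

section
/- Let F be entire with F(x) = e^{ikx} on ℝ for k ∈ ℝ. For t > 0 and x ∈ ℝ, the rotated integral (with α = π/4) Ψ₀(t,x;e^{ik·}) = (1/(2√(πt))) ∫₀^∞ e^{-(|x| + y√i)²/(4it)} e^{iky√i} dy equals (1/2) e^{-x²/(4it)} Λ(|x|/(2√(it)) - ik√(it)). -/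
open MeasureTheory intervalIntegral Set Filter Topology

/-!
Completing the square turns the integrand into
`e^{-x²/(4it)} e^{c²} e^{-(y/(2√t) + c)²}` with `c = |x|/(2√(it)) - ik√(it)`, using
`(e^{iπ/4})² = i`. After rescaling `y`, what is left is the Gaussian tail `∫₀^∞ e^{-(u+c)²} du`,
which equals `(√π/2)(1 - erf c)` for every complex `c`: along the ray `s ↦ s c` its derivative is
`-c e^{-(sc)²}`, which cancels the derivative of `(√π/2) erf (s c)`, and both sides agree at
`s = 0`.
-/

open scoped Real Complex

lemma norm_cexp_neg_sq_ofReal_add_le (u : ℝ) (d : ℂ) :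
    ‖cexp (-((u : ℂ) + d) ^ 2)‖ ≤ rexp (‖d‖ ^ 2 - u ^ 2 / 2) := by
  rw [Complex.norm_exp, Real.exp_le_exp, Complex.sq_norm, Complex.normSq_apply]
  simp only [Complex.neg_re, sq, Complex.mul_re, Complex.add_re, Complex.add_im,
    Complex.ofReal_re, Complex.ofReal_im, zero_add]
  nlinarith [sq_nonneg (u + 2 * d.re)]

lemma integrable_cexp_neg_sq_ofReal_add (d : ℂ) :
    Integrable fun u : ℝ => cexp (-((u : ℂ) + d) ^ 2) := by
  refine ((integrable_exp_neg_mul_sq (by norm_num : (0 : ℝ) < 1 / 2)).const_mul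
    (rexp (‖d‖ ^ 2))).mono' (Continuous.aestronglyMeasurable (by fun_prop))
    (Eventually.of_forall fun u => (norm_cexp_neg_sq_ofReal_add_le u d).trans_eq ?_)
  rw [← Real.exp_add]
  congr 1
  ring

lemma tendsto_cexp_neg_sq_ofReal_add_atTop (d : ℂ) :
    Tendsto (fun u : ℝ => cexp (-((u : ℂ) + d) ^ 2)) atTop (𝓝 0) := by
  refine squeeze_zero_norm (fun u => norm_cexp_neg_sq_ofReal_add_le u d)
    (Real.tendsto_exp_atBot.comp ?_)
  simp_rw [sub_eq_add_neg]
  exact tendsto_atBot_add_const_left _ _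
    (tendsto_neg_atTop_atBot.comp ((tendsto_pow_atTop two_ne_zero).atTop_div_const two_pos))

lemma hasDerivAt_cexp_neg_sq (z : ℂ) :
    HasDerivAt (fun z => cexp (-z ^ 2)) (-2 * z * cexp (-z ^ 2)) z :=
  ((hasDerivAt_pow 2 z).neg).cexp.congr_deriv (by simp; ring)

lemma norm_deriv_cexp_neg_sq_ofReal_add_mul_le (c : ℂ) {u r M : ℝ} (hu : 0 ≤ u)
    (hr : |r| ≤ M) :
    ‖-2 * ((u : ℂ) + r * c) * cexp (-((u : ℂ) + r * c) ^ 2) * c‖ ≤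
      2 * ‖c‖ * rexp ((M * ‖c‖) ^ 2) *
        (u * rexp (-(1 / 2) * u ^ 2) + M * ‖c‖ * rexp (-(1 / 2) * u ^ 2)) := by
  have hrc : ‖(r : ℂ) * c‖ ≤ M * ‖c‖ := by
    rw [norm_mul, Complex.norm_real, Real.norm_eq_abs]
    gcongr
  have hsum : ‖(u : ℂ) + r * c‖ ≤ u + M * ‖c‖ := by
    refine (norm_add_le _ _).trans ?_
    rw [Complex.norm_real, Real.norm_of_nonneg hu]
    gcongr
  have hexp :
      ‖cexp (-((u : ℂ) + r * c) ^ 2)‖ ≤ rexp ((M * ‖c‖) ^ 2) * rexp (-(1 / 2) * u ^ 2) := by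
    refine (norm_cexp_neg_sq_ofReal_add_le u _).trans ?_
    rw [← Real.exp_add, Real.exp_le_exp]
    nlinarith [norm_nonneg ((r : ℂ) * c)]
  calc ‖-2 * ((u : ℂ) + r * c) * cexp (-((u : ℂ) + r * c) ^ 2) * c‖
      = 2 * ‖c‖ * (‖(u : ℂ) + r * c‖ * ‖cexp (-((u : ℂ) + r * c) ^ 2)‖) := by
        simp only [norm_mul, norm_neg, Complex.norm_ofNat]
        ring
    _ ≤ 2 * ‖c‖ * ((u + M * ‖c‖) * (rexp ((M * ‖c‖) ^ 2) * rexp (-(1 / 2) * u ^ 2))) := by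
        gcongr
        exact (norm_nonneg _).trans hsum
    _ = _ := by ring

lemma hasDerivAt_integral_Ioi_cexp_neg_sq_ofReal_add_mul (c : ℂ) (s : ℝ) :
    HasDerivAt (fun r : ℝ => ∫ u in Ioi (0 : ℝ), cexp (-((u : ℂ) + r * c) ^ 2))
      (-(cexp (-(s * c) ^ 2) * c)) s := by
  have hF' : ∀ u r : ℝ, HasDerivAt (fun r : ℝ => cexp (-((u : ℂ) + r * c) ^ 2))
      (-2 * ((u : ℂ) + r * c) * cexp (-((u : ℂ) + r * c) ^ 2) * c) r := fun u r =>
    ((hasDerivAt_cexp_neg_sq _).comp (r : ℂ)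
      (((hasDerivAt_id (r : ℂ)).mul_const c).const_add (u : ℂ))).comp_ofReal.congr_deriv
      (by simp)
  obtain ⟨hF'_int, hderiv⟩ := _root_.hasDerivAt_integral_of_dominated_loc_of_deriv_le
    (μ := volume.restrict (Ioi 0))
    (F := fun (r : ℝ) (u : ℝ) => cexp (-((u : ℂ) + r * c) ^ 2))
    (F' := fun (r : ℝ) (u : ℝ) => -2 * ((u : ℂ) + r * c) * cexp (-((u : ℂ) + r * c) ^ 2) * c)
    (Metric.ball_mem_nhds s one_pos)
    (Eventually.of_forall fun r => Continuous.aestronglyMeasurable (by fun_prop))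
    (integrable_cexp_neg_sq_ofReal_add _).integrableOn
    (Continuous.aestronglyMeasurable (by fun_prop))
    ((ae_restrict_iff' measurableSet_Ioi).2 (Eventually.of_forall fun u (hu : 0 < u) r hr =>
      norm_deriv_cexp_neg_sq_ofReal_add_mul_le c hu.le (M := |s| + 1) (by
        have := abs_sub_abs_le_abs_sub r s
        rw [Metric.mem_ball, Real.dist_eq] at hr
        linarith)))
    ((((integrable_mul_exp_neg_mul_sq (by norm_num : (0 : ℝ) < 1 / 2)).add
      ((integrable_exp_neg_mul_sq (by norm_num : (0 : ℝ) < 1 / 2)).const_mul _)).const_mul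
        _).integrableOn)
    (Eventually.of_forall fun u r _ => hF' u r)
  -- the derivative is itself a total derivative in `u`, so its integral is a boundary term
  have hboundary : ∀ u : ℝ, HasDerivAt (fun u : ℝ => cexp (-((u : ℂ) + s * c) ^ 2) * c)
      (-2 * ((u : ℂ) + s * c) * cexp (-((u : ℂ) + s * c) ^ 2) * c) u := fun u =>
    (((hasDerivAt_cexp_neg_sq _).comp (u : ℂ)
      ((hasDerivAt_id (u : ℂ)).add_const _)).comp_ofReal.mul_const c).congr_deriv (by simp)
  have hF'_integral :
      ∫ u in Ioi (0 : ℝ), -2 * ((u : ℂ) + s * c) * cexp (-((u : ℂ) + s * c) ^ 2) * c =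
        -(cexp (-(s * c) ^ 2) * c) := by
    simpa using integral_Ioi_of_hasDerivAt_of_tendsto' (fun u _ => hboundary u) hF'_int
      ((tendsto_cexp_neg_sq_ofReal_add_atTop _).mul_const c)
  rwa [hF'_integral] at hderiv

lemma integral_Ioi_cexp_neg_sq_s17 : ∫ u in Ioi (0 : ℝ), cexp (-(u : ℂ) ^ 2) = (√π / 2 : ℝ) := by
  have h := integral_gaussian_Ioi 1
  rw [div_one] at h
  rw [← h, ← integral_complex_ofReal]
  push_cast
  simp

theorem integral_Ioi_cexp_neg_sq_ofReal_add (c : ℂ) :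
    ∫ u in Ioi (0 : ℝ), cexp (-((u : ℂ) + c) ^ 2) = (√π / 2 : ℝ) * (1 - cerf c) := by
  set h : ℝ → ℂ := fun s => (∫ u in Ioi (0 : ℝ), cexp (-((u : ℂ) + s * c) ^ 2)) +
    ∫ r in (0 : ℝ)..s, c * cexp (-(r * c) ^ 2)
  have hcont : Continuous fun r : ℝ => c * cexp (-(r * c) ^ 2) := by fun_prop
  have hderiv (s : ℝ) : HasDerivAt h 0 s :=
    ((hasDerivAt_integral_Ioi_cexp_neg_sq_ofReal_add_mul c s).add
      (hcont.integral_hasStrictDerivAt 0 s).hasDerivAt).congr_deriv (by ring)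
  have hconst : h 1 = h 0 :=
    is_const_of_deriv_eq_zero (fun s => (hderiv s).differentiableAt)
      (fun s => (hderiv s).deriv) 1 0
  have hcerf : ∫ r in (0 : ℝ)..1, c * cexp (-(r * c) ^ 2) = (√π / 2 : ℝ) * cerf c := by
    have hπ : (√π : ℂ) ≠ 0 := by exact_mod_cast (Real.sqrt_pos.2 Real.pi_pos).ne'
    rw [cerf, ← mul_assoc]
    push_cast
    field_simp
  simp only [h, Complex.ofReal_one, one_mul, Complex.ofReal_zero, zero_mul, add_zero,
    intervalIntegral.integral_same, integral_Ioi_cexp_neg_sq_s17, hcerf] at hconst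
  linear_combination hconst

lemma integral_Ioi_cexp_neg_sq_div_add (c : ℂ) {a : ℝ} (ha : 0 < a) :
    ∫ y in Ioi (0 : ℝ), cexp (-((y : ℂ) / a + c) ^ 2) =
      a * ((√π / 2 : ℝ) * (1 - cerf c)) := by
  have h :=
    integral_comp_mul_left_Ioi (fun u : ℝ => cexp (-((u : ℂ) + c) ^ 2)) 0 (inv_pos.2 ha)
  simp only [mul_zero, inv_inv, Complex.real_smul, integral_Ioi_cexp_neg_sq_ofReal_add] at h
  rw [← h]
  congr 1 with y
  push_cast
  ring_nf

lemma exp_pi_div_four_mul_I_sq : cexp (π / 4 * Complex.I) ^ 2 = Complex.I := by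
  rw [← Complex.exp_nat_mul]
  convert Complex.exp_pi_div_two_mul_I using 2
  push_cast
  ring

lemma plane_wave_exponent_eq_complete_square {w T : ℂ} (hw : w ^ 2 = Complex.I) (hT : T ≠ 0)
    (X k y : ℂ) :
    -(X + y * w) ^ 2 / (4 * Complex.I * T ^ 2) + Complex.I * k * y * w =
      -X ^ 2 / (4 * Complex.I * T ^ 2) + (X / (2 * (w * T)) - Complex.I * k * (w * T)) ^ 2 -
        (y / (2 * T) + (X / (2 * (w * T)) - Complex.I * k * (w * T))) ^ 2 := by
  have hw0 : w ≠ 0 := fun h => Complex.I_ne_zero (by rw [← hw, h]; ring)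
  rw [← hw]
  field_simp
  ring

theorem Psi0_plane_wave (k t x : ℝ) (ht : 0 < t) :
    (1 / (2 * (Real.sqrt (Real.pi * t) : ℂ))) *
        ∫ y in Set.Ioi (0:ℝ),
          Complex.exp (-(((|x| : ℝ) : ℂ) + (y : ℂ) * Complex.exp (Real.pi / 4 * Complex.I))^2 /
              (4 * Complex.I * (t : ℂ))) *
            Complex.exp (Complex.I * (k : ℂ) * (y : ℂ) * Complex.exp (Real.pi / 4 * Complex.I)) =
      (1 / 2) * Complex.exp (-(x : ℂ)^2 / (4 * Complex.I * (t : ℂ))) *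
        Lam (((|x| : ℝ) : ℂ) / (2 * sqit t) - Complex.I * (k : ℂ) * sqit t) := by
  set w := cexp (π / 4 * Complex.I)
  set c := ((|x| : ℝ) : ℂ) / (2 * sqit t) - Complex.I * k * sqit t
  have hsqrt : 0 < √t := Real.sqrt_pos.2 ht
  have ht_sq : (t : ℂ) = (√t : ℂ) ^ 2 := by exact_mod_cast (Real.sq_sqrt ht.le).symm
  have hx_sq : (x : ℂ) ^ 2 = ((|x| : ℝ) : ℂ) ^ 2 := by exact_mod_cast (sq_abs x).symm
  have hintegrand (y : ℝ) :
      cexp (-(((|x| : ℝ) : ℂ) + y * w) ^ 2 / (4 * Complex.I * t)) *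
          cexp (Complex.I * k * y * w) =
        cexp (-(x : ℂ) ^ 2 / (4 * Complex.I * t)) * cexp (c ^ 2) *
          cexp (-((y : ℂ) / (2 * √t : ℝ) + c) ^ 2) := by
    rw [← Complex.exp_add, ← Complex.exp_add, ← Complex.exp_add, ht_sq, hx_sq,
      plane_wave_exponent_eq_complete_square exp_pi_div_four_mul_I_sq
        (by exact_mod_cast hsqrt.ne')]
    congr 1
    simp only [c, sqit]
    push_cast
    ring
  simp_rw [hintegrand]
  rw [MeasureTheory.integral_const_mul, integral_Ioi_cexp_neg_sq_div_add c (by positivity), Lam,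
    Real.sqrt_mul Real.pi_pos.le]
  have hπ : (√π : ℂ) ≠ 0 := by exact_mod_cast (Real.sqrt_pos.2 Real.pi_pos).ne'
  have ht' : (√t : ℂ) ≠ 0 := by exact_mod_cast hsqrt.ne'
  push_cast
  field_simp
end
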